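/- MIOs with asynchronous composition, weak modal refinement, and asynchronous modal compatibility form an interface theory: (1) asynchronously compatible MIOs are composable; (2) if S' ≤_m* S, T' ≤_m* T and S ⊗_as T is defined, then S' ⊗_as T' is defined and S' ⊗_as T' ≤_m* S ⊗_as T; (3) if S ⇄_ac T, S' ≤_m* S and T' ≤_m* T, then S' ⇄_ac T'. -/

import Mathlib

/-- A modal I/O-transition system (MIO): states, an initial state, a signature of
input, output and internal actions (pairwise disjoint subsets of the action
universe `A`), may-transitions and must-transitions with must ⊆ may. -/
structure MIO (A : Type) where
  State : Type
  start : State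
  inp : Set A
  out : Set A
  intl : Set A
  may : State → A → State → Prop
  must : State → A → State → Prop
  inp_out : ∀ a, a ∈ inp → a ∈ out → False
  inp_intl : ∀ a, a ∈ inp → a ∈ intl → False
  out_intl : ∀ a, a ∈ out → a ∈ intl → False
  must_sub : ∀ s a s', must s a s' → may s a s'

namespace MIO

variable {A B : Type}

/-- The set of all actions of a MIO. -/
def act (S : MIO A) : Set A := S.inp ∪ S.out ∪ S.intl

/-- Two MIOs have the same signature. -/
def SigEq (S T : MIO A) : Prop := S.inp = T.inp ∧ S.out = T.out ∧ S.intl = T.intl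

/-- Strong modal refinement `S ≤_m T`. -/
def StrongRefines (S T : MIO A) : Prop :=
  SigEq S T ∧
  ∃ R : S.State → T.State → Prop, R S.start T.start ∧
    ∀ s t, R s t →
      (∀ a t', T.must t a t' → ∃ s', S.must s a s' ∧ R s' t') ∧
      (∀ a s', S.may s a s' → ∃ t', T.may t a t' ∧ R s' t')

/-- One internal must-transition. -/
def tauMust (S : MIO A) (s s' : S.State) : Prop := ∃ a ∈ S.intl, S.must s a s'

/-- Finitely many (possibly zero) internal must-transitions. -/
def tauMustStar (S : MIO A) : S.State → S.State → Prop := Relation.ReflTransGen S.tauMust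

/-- One internal may-transition. -/
def tauMay (S : MIO A) (s s' : S.State) : Prop := ∃ a ∈ S.intl, S.may s a s'

/-- Finitely many (possibly zero) internal may-transitions. -/
def tauMayStar (S : MIO A) : S.State → S.State → Prop := Relation.ReflTransGen S.tauMay

/-- Weak modal refinement `S ≤_m* T`. -/
def WeakRefines (S T : MIO A) : Prop :=
  SigEq S T ∧
  ∃ R : S.State → T.State → Prop, R S.start T.start ∧
    ∀ s t, R s t →
      (∀ a ∈ T.inp ∪ T.out, ∀ t', T.must t a t' →
        ∃ s1 s2 s', S.tauMustStar s s1 ∧ S.must s1 a s2 ∧ S.tauMustStar s2 s' ∧ R s' t') ∧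
      (∀ a ∈ T.intl, ∀ t', T.must t a t' → ∃ s', S.tauMustStar s s' ∧ R s' t') ∧
      (∀ a ∈ S.inp ∪ S.out, ∀ s', S.may s a s' →
        ∃ t1 t2 t', T.tauMayStar t t1 ∧ T.may t1 a t2 ∧ T.tauMayStar t2 t' ∧ R s' t') ∧
      (∀ a ∈ S.intl, ∀ s', S.may s a s' → ∃ t', T.tauMayStar t t' ∧ R s' t')

/-- Shared actions of two MIOs. -/
def shared (S T : MIO A) : Set A := S.act ∩ T.act

/-- Two MIOs are (syntactically) composable if their actions overlap only on
complementary types. -/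
def Composable (S T : MIO A) : Prop :=
  shared S T ⊆ (S.inp ∩ T.out) ∪ (T.inp ∩ S.out)

/-- Synchronous composition `S ⊗_sy T` of composable MIOs. -/
def syncComp (S T : MIO A) (_h : Composable S T) : MIO A where
  State := S.State × T.State
  start := (S.start, T.start)
  inp := (S.inp ∪ T.inp) \ shared S T
  out := (S.out ∪ T.out) \ shared S T
  intl := S.intl ∪ T.intl ∪ shared S T
  may p a p' :=
    (a ∈ shared S T ∧ S.may p.1 a p'.1 ∧ T.may p.2 a p'.2) ∨
    (a ∈ S.act ∧ a ∉ shared S T ∧ S.may p.1 a p'.1 ∧ p'.2 = p.2) ∨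
    (a ∈ T.act ∧ a ∉ shared S T ∧ T.may p.2 a p'.2 ∧ p'.1 = p.1)
  must p a p' :=
    (a ∈ shared S T ∧ S.must p.1 a p'.1 ∧ T.must p.2 a p'.2) ∨
    (a ∈ S.act ∧ a ∉ shared S T ∧ S.must p.1 a p'.1 ∧ p'.2 = p.2) ∨
    (a ∈ T.act ∧ a ∉ shared S T ∧ T.must p.2 a p'.2 ∧ p'.1 = p.1)
  inp_out := by
    intro a ha hb
    have h1 := S.inp_out a; have h2 := T.inp_out a
    simp only [Set.mem_diff, Set.mem_union, shared, act, Set.mem_inter_iff] at ha hb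
    tauto
  inp_intl := by
    intro a ha hb
    have h1 := S.inp_intl a; have h2 := T.inp_intl a
    simp only [Set.mem_diff, Set.mem_union, shared, act, Set.mem_inter_iff] at ha hb
    tauto
  out_intl := by
    intro a ha hb
    have h1 := S.out_intl a; have h2 := T.out_intl a
    simp only [Set.mem_diff, Set.mem_union, shared, act, Set.mem_inter_iff] at ha hb
    tauto
  must_sub := by
    rintro p a p' (⟨h1, h2, h3⟩ | ⟨h1, h2, h3, h4⟩ | ⟨h1, h2, h3, h4⟩)
    · exact Or.inl ⟨h1, S.must_sub _ _ _ h2, T.must_sub _ _ _ h3⟩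
    · exact Or.inr (Or.inl ⟨h1, h2, S.must_sub _ _ _ h3, h4⟩)
    · exact Or.inr (Or.inr ⟨h1, h2, T.must_sub _ _ _ h3, h4⟩)

/-- Reachability (w.r.t. may-transitions) from the initial state. -/
def Reachable (M : MIO A) (s : M.State) : Prop :=
  Relation.ReflTransGen (fun x y => ∃ a, M.may x a y) M.start s

/-- Strong modal compatibility `S ⇄_sc T`. -/
def StrongCompat (S T : MIO A) : Prop :=
  ∃ h : Composable S T,
    ∀ p : S.State × T.State, (syncComp S T h).Reachable p →
      (∀ a ∈ S.out ∩ T.inp, ∀ s', S.may p.1 a s' → ∃ t', T.must p.2 a t') ∧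
      (∀ a ∈ T.out ∩ S.inp, ∀ t', T.may p.2 a t' → ∃ s', S.must p.1 a s')

/-- Weak modal compatibility `S ⇄_wc T`. -/
def WeakCompat (S T : MIO A) : Prop :=
  ∃ h : Composable S T,
    ∀ p : S.State × T.State, (syncComp S T h).Reachable p →
      (∀ a ∈ S.out ∩ T.inp, ∀ s', S.may p.1 a s' →
        ∃ t1 t', T.tauMustStar p.2 t1 ∧ T.must t1 a t') ∧
      (∀ a ∈ T.out ∩ S.inp, ∀ t', T.may p.2 a t' →
        ∃ s1 s', S.tauMustStar p.1 s1 ∧ S.must s1 a s')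

/-- Finite executions: `Trace M s as s'` means `M` can go from `s` to `s'` by
a sequence of may-transitions labelled by the list of actions `as`. -/
inductive Trace (M : MIO A) : M.State → List A → M.State → Prop
  | nil (s : M.State) : Trace M s [] s
  | cons {s s' s'' : M.State} {a : A} {as : List A} :
      M.may s a s' → Trace M s' as s'' → Trace M s (a :: as) s''

/-- Renaming the actions of a MIO along an injective function. -/
def rename (f : A → B) (hf : Function.Injective f) (S : MIO A) : MIO B where
  State := S.State
  start := S.start
  inp := f '' S.inp
  out := f '' S.out
  intl := f '' S.intl
  may s b s' := ∃ a, b = f a ∧ S.may s a s'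
  must s b s' := ∃ a, b = f a ∧ S.must s a s'
  inp_out := by
    rintro b ⟨a1, h1, rfl⟩ ⟨a2, h2, heq⟩
    obtain rfl := hf heq
    exact S.inp_out a2 h1 h2
  inp_intl := by
    rintro b ⟨a1, h1, rfl⟩ ⟨a2, h2, heq⟩
    obtain rfl := hf heq
    exact S.inp_intl a2 h1 h2
  out_intl := by
    rintro b ⟨a1, h1, rfl⟩ ⟨a2, h2, heq⟩
    obtain rfl := hf heq
    exact S.out_intl a2 h1 h2
  must_sub := by
    rintro s b s' ⟨a, rfl, h⟩
    exact ⟨a, rfl, S.must_sub _ _ _ h⟩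

-- Tagging function: actions in `o` become the fresh "queue input" actions `n^▷`
-- (encoded as `Sum.inr n`), all other actions are kept (as `Sum.inl a`).
open Classical in
noncomputable def tagged (o : Set A) : A → A ⊕ A :=
  fun a => if a ∈ o then Sum.inr a else Sum.inl a

theorem tagged_injective (o : Set A) : Function.Injective (tagged o) := by
  classical
  intro a b h
  by_cases ha : a ∈ o <;> by_cases hb : b ∈ o <;>
    simp [tagged, ha, hb] at h <;> tauto

/-- The queue MIO `Q_o`: a FIFO buffer for messages in `o`. States are finite
strings over `A` (with reachable states being strings over `o`), inputs are the
tagged actions `n^▷ = Sum.inr n`, outputs the actions `n = Sum.inl n` for `n ∈ o`.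
Enqueue at the front, dequeue from the back; may- and must-transitions coincide. -/
def queueMIO (o : Set A) : MIO (A ⊕ A) where
  State := List A
  start := []
  inp := Sum.inr '' o
  out := Sum.inl '' o
  intl := ∅
  may s b s' :=
    (∃ n ∈ o, b = Sum.inr n ∧ s' = n :: s) ∨ (∃ n ∈ o, b = Sum.inl n ∧ s = s' ++ [n])
  must s b s' :=
    (∃ n ∈ o, b = Sum.inr n ∧ s' = n :: s) ∨ (∃ n ∈ o, b = Sum.inl n ∧ s = s' ++ [n])
  inp_out := by rintro b ⟨n, hn, rfl⟩ ⟨m, hm, h⟩; simp at h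
  inp_intl := by rintro b _ h; simp at h
  out_intl := by rintro b _ h; simp at h
  must_sub := fun _ _ _ h => h

theorem omega_composable (o : Set A) (S : MIO A) (ho : o ⊆ S.out) :
    Composable (rename (tagged o) (tagged_injective o) S) (queueMIO o) := by
  classical
  rintro b ⟨hb1, hb2⟩
  have hq : (∃ n ∈ o, Sum.inr n = b) ∨ (∃ n ∈ o, Sum.inl n = b) := by
    simpa [queueMIO, act, Set.image, Set.mem_union] using hb2
  have hr : ∃ a, ((a ∈ S.inp ∨ a ∈ S.out) ∨ a ∈ S.intl) ∧ tagged o a = b := by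
    simpa [rename, act, ← Set.image_union] using hb1
  obtain ⟨a, _, ha⟩ := hr
  rcases hq with ⟨n, hn, hb⟩ | ⟨n, hn, hb⟩
  · right
    constructor
    · exact ⟨n, hn, hb⟩
    · refine ⟨n, ho hn, ?_⟩
      rw [← hb]; simp [tagged, hn]
  · exfalso
    rw [← hb] at ha
    by_cases h : a ∈ o
    · simp [tagged, h] at ha
    · simp [tagged, h] at ha
      exact h (ha ▸ hn)

/-- `Ω_o(S)`: the MIO `S` with an output queue for `o ⊆ out_S`, i.e. the
synchronous product of the renamed MIO `S_o^▷` with the queue MIO `Q_o`. -/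
noncomputable def Omega (o : Set A) (S : MIO A) (ho : o ⊆ S.out) : MIO (A ⊕ A) :=
  syncComp (rename (tagged o) (tagged_injective o) S) (queueMIO o) (omega_composable o S ho)

/-- The outputs of `S` that are inputs of `T`. -/
def oOf (S T : MIO A) : Set A := S.out ∩ T.inp

/-- `Ω_{o_S}(S)` where `o_S = out_S ∩ in_T`. -/
noncomputable def OmegaC (S T : MIO A) : MIO (A ⊕ A) :=
  Omega (oOf S T) S Set.inter_subset_left

/-- Composability of the queue-extended MIOs, i.e. definedness of `S ⊗_as T`. -/
def AsyncComposable (S T : MIO A) : Prop := Composable (OmegaC S T) (OmegaC T S)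

/-- Asynchronous composition `S ⊗_as T = Ω_{o_S}(S) ⊗_sy Ω_{o_T}(T)`. -/
noncomputable def asyncComp (S T : MIO A) (h : AsyncComposable S T) : MIO (A ⊕ A) :=
  syncComp (OmegaC S T) (OmegaC T S) h

/-- Asynchronous modal compatibility `S ⇄_ac T`. -/
def AsyncCompat (S T : MIO A) : Prop :=
  Composable S T ∧ WeakCompat (OmegaC S T) (OmegaC T S)

end MIO

open MIO

/-!
Weak modal refinement `S' ≤_m* S` is the conjunction of two one-sided weak simulations: `S'`
answers the must-steps of `S`, and `S` answers the may-steps of `S'`. Each one-sided simulation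
survives renaming and synchronous products, because a product step is a step of one component
or a synchronisation of both, and a synchronisation is matched by synchronising the two weak
answers, which is internal in the product. Adding a queue is a renaming followed by a product
with the queue, so (2) follows. For (3), the may-simulation maps every reachable state of
`Ω(S') ⊗_sy Ω(T')` to a related reachable state of `Ω(S) ⊗_sy Ω(T)`; there compatibility gives
a must-answer, which the must-simulation carries back. Composability of `S` and `T` yields that
of their queued versions, since the two queues receive on disjoint sets of fresh actions.
-/

namespace MIO

variable {A B : Type}

section Signatures

variable {S S' T T' : MIO A}

theorem SigEq.symm (h : SigEq S' S) : SigEq S S' :=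
  ⟨h.1.symm, h.2.1.symm, h.2.2.symm⟩

theorem SigEq.act_eq (h : SigEq S' S) : S'.act = S.act := by
  rw [act, act, h.1, h.2.1, h.2.2]

theorem SigEq.shared_eq (hS : SigEq S' S) (hT : SigEq T' T) : shared S' T' = shared S T := by
  rw [shared, shared, hS.act_eq, hT.act_eq]

theorem Composable.of_sigEq (h : Composable S T) (hS : SigEq S' S) (hT : SigEq T' T) :
    Composable S' T' := by
  rw [Composable, hS.shared_eq hT, hS.1, hS.2.1, hT.1, hT.2.1]
  exact h

theorem SigEq.syncComp (hS : SigEq S' S) (hT : SigEq T' T) (hc' : Composable S' T')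
    (hc : Composable S T) : SigEq (syncComp S' T' hc') (syncComp S T hc) := by
  refine ⟨?_, ?_, ?_⟩ <;>
    simp only [MIO.syncComp, hS.1, hS.2.1, hS.2.2, hT.1, hT.2.1, hT.2.2, hS.shared_eq hT]

theorem notMem_intl_of_mem_inp_union_out {a : A} (ha : a ∈ S.inp ∪ S.out) : a ∉ S.intl :=
  ha.elim (S.inp_intl a) (S.out_intl a)

theorem Composable.mem_inp_union_out_left (h : Composable S T) {a : A} (ha : a ∈ shared S T) :
    a ∈ S.inp ∪ S.out := by
  rcases h ha with ⟨hi, -⟩ | ⟨-, ho⟩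
  exacts [Or.inl hi, Or.inr ho]

theorem Composable.mem_inp_union_out_right (h : Composable S T) {a : A}
    (ha : a ∈ shared S T) : a ∈ T.inp ∪ T.out := by
  rcases h ha with ⟨-, ho⟩ | ⟨hi, -⟩
  exacts [Or.inr ho, Or.inl hi]

theorem act_syncComp (h : Composable S T) : (syncComp S T h).act = S.act ∪ T.act := by
  ext a
  by_cases hsh : a ∈ shared S T
  · have hact : a ∈ S.act ∧ a ∈ T.act := hsh
    simp only [act, MIO.syncComp, Set.mem_union, Set.mem_sdiff, hsh] at hact ⊢
    tauto
  · simp only [act, MIO.syncComp, Set.mem_union, Set.mem_sdiff, hsh]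
    tauto

theorem act_rename (f : A → B) (hf : Function.Injective f) :
    (rename f hf S).act = f '' S.act := by
  simp only [act, rename, Set.image_union]

end Signatures

inductive Modality
  | must
  | may

section Steps

variable (M : MIO A) (m : Modality)

def step : Modality → M.State → A → M.State → Prop
  | .must => M.must
  | .may => M.may

def tauStep (x y : M.State) : Prop := ∃ a ∈ M.intl, M.step m x a y

def tauStar : M.State → M.State → Prop := Relation.ReflTransGen (M.tauStep m)

/-- The weak transition `x ⟹^â y` of the paper: `τ* a τ*`, where an internal `a` may also be
skipped. -/
def weakStep (x : M.State) (a : A) (y : M.State) : Prop :=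
  (a ∈ M.intl ∧ M.tauStar m x y) ∨
    ∃ x₁ x₂, M.tauStar m x x₁ ∧ M.step m x₁ a x₂ ∧ M.tauStar m x₂ y

variable {M m}

theorem weakStep_of_step {x y : M.State} {a : A} (h : M.step m x a y) : M.weakStep m x a y :=
  Or.inr ⟨x, y, .refl, h, .refl⟩

theorem weakStep.tauStar {x y : M.State} {a : A} (h : M.weakStep m x a y) (ha : a ∈ M.intl) :
    M.tauStar m x y := by
  rcases h with ⟨-, h⟩ | ⟨x₁, x₂, h₁, h₂, h₃⟩
  exacts [h, (h₁.tail ⟨a, ha, h₂⟩).trans h₃]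

theorem weakStep.exists_step {x y : M.State} {a : A} (h : M.weakStep m x a y) (ha : a ∉ M.intl) :
    ∃ x₁ x₂, M.tauStar m x x₁ ∧ M.step m x₁ a x₂ ∧ M.tauStar m x₂ y := by
  rcases h with ⟨ha', -⟩ | h
  exacts [absurd ha' ha, h]

end Steps

section Lifting

variable {S T : MIO A} {m : Modality} {s s' : S.State} {t t' : T.State} {a : A}

theorem step_syncComp (h : Composable S T) {p p' : S.State × T.State} :
    (syncComp S T h).step m p a p' ↔
      (a ∈ shared S T ∧ S.step m p.1 a p'.1 ∧ T.step m p.2 a p'.2) ∨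
      (a ∈ S.act ∧ a ∉ shared S T ∧ S.step m p.1 a p'.1 ∧ p'.2 = p.2) ∨
      (a ∈ T.act ∧ a ∉ shared S T ∧ T.step m p.2 a p'.2 ∧ p'.1 = p.1) := by
  cases m <;> rfl

theorem tauStar_syncComp_left (h : Composable S T) (hs : S.tauStar m s s') :
    (syncComp S T h).tauStar m (s, t) (s', t) :=
  hs.lift (·, t) fun _ _ ⟨a, ha, hstep⟩ => ⟨a, Or.inl (Or.inl ha), (step_syncComp h).2 <|
    Or.inr (Or.inl ⟨Or.inr ha, fun hsh => notMem_intl_of_mem_inp_union_out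
      (h.mem_inp_union_out_left hsh) ha, hstep, rfl⟩)⟩

theorem tauStar_syncComp_right (h : Composable S T) (ht : T.tauStar m t t') :
    (syncComp S T h).tauStar m (s, t) (s, t') :=
  ht.lift (s, ·) fun _ _ ⟨a, ha, hstep⟩ => ⟨a, Or.inl (Or.inr ha), (step_syncComp h).2 <|
    Or.inr (Or.inr ⟨Or.inr ha, fun hsh => notMem_intl_of_mem_inp_union_out
      (h.mem_inp_union_out_right hsh) ha, hstep, rfl⟩)⟩

theorem weakStep.syncComp_left (h : Composable S T) (hs : S.weakStep m s a s')
    (ha : a ∈ S.act) (hsh : a ∉ shared S T) :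
    (syncComp S T h).weakStep m (s, t) a (s', t) := by
  rcases hs with ⟨hi, hs⟩ | ⟨s₁, s₂, h₁, h₂, h₃⟩
  · exact Or.inl ⟨Or.inl (Or.inl hi), tauStar_syncComp_left h hs⟩
  · exact Or.inr ⟨(s₁, t), (s₂, t), tauStar_syncComp_left h h₁,
      (step_syncComp h).2 (Or.inr (Or.inl ⟨ha, hsh, h₂, rfl⟩)), tauStar_syncComp_left h h₃⟩

theorem weakStep.syncComp_right (h : Composable S T) (ht : T.weakStep m t a t')
    (ha : a ∈ T.act) (hsh : a ∉ shared S T) :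
    (syncComp S T h).weakStep m (s, t) a (s, t') := by
  rcases ht with ⟨hi, ht⟩ | ⟨t₁, t₂, h₁, h₂, h₃⟩
  · exact Or.inl ⟨Or.inl (Or.inr hi), tauStar_syncComp_right h ht⟩
  · exact Or.inr ⟨(s, t₁), (s, t₂), tauStar_syncComp_right h h₁,
      (step_syncComp h).2 (Or.inr (Or.inr ⟨ha, hsh, h₂, rfl⟩)), tauStar_syncComp_right h h₃⟩

theorem weakStep.syncComp_shared (h : Composable S T) (hs : S.weakStep m s a s')
    (ht : T.weakStep m t a t') (hsh : a ∈ shared S T) :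
    (syncComp S T h).weakStep m (s, t) a (s', t') := by
  obtain ⟨s₁, s₂, hs₁, hs₂, hs₃⟩ :=
    hs.exists_step (notMem_intl_of_mem_inp_union_out (h.mem_inp_union_out_left hsh))
  obtain ⟨t₁, t₂, ht₁, ht₂, ht₃⟩ :=
    ht.exists_step (notMem_intl_of_mem_inp_union_out (h.mem_inp_union_out_right hsh))
  refine Or.inl ⟨Or.inr hsh, ?_⟩
  have hsync : (syncComp S T h).tauStep m (s₁, t₁) (s₂, t₂) :=
    ⟨a, Or.inr hsh, (step_syncComp h).2 (Or.inl ⟨hsh, hs₂, ht₂⟩)⟩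
  exact ((tauStar_syncComp_left h hs₁).trans (tauStar_syncComp_right h ht₁)).tail hsync
    |>.trans <| (tauStar_syncComp_left h hs₃).trans (tauStar_syncComp_right h ht₃)

theorem step_rename (f : A → B) (hf : Function.Injective f) {b : B} :
    (rename f hf S).step m s b s' ↔ ∃ a, b = f a ∧ S.step m s a s' := by
  cases m <;> rfl

theorem tauStar_rename (f : A → B) (hf : Function.Injective f) (hs : S.tauStar m s s') :
    (rename f hf S).tauStar m s s' :=
  Relation.ReflTransGen.mono
    (fun _ _ ⟨a, ha, hstep⟩ => ⟨f a, ⟨a, ha, rfl⟩, (step_rename f hf).2 ⟨a, rfl, hstep⟩⟩) _ _ hs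

theorem weakStep.rename (f : A → B) (hf : Function.Injective f) (hs : S.weakStep m s a s') :
    (rename f hf S).weakStep m s (f a) s' := by
  rcases hs with ⟨hi, hs⟩ | ⟨s₁, s₂, h₁, h₂, h₃⟩
  · exact Or.inl ⟨⟨a, hi, rfl⟩, tauStar_rename f hf hs⟩
  · exact Or.inr ⟨s₁, s₂, tauStar_rename f hf h₁, (step_rename f hf).2 ⟨a, rfl, h₂⟩,
      tauStar_rename f hf h₃⟩

end Lifting

/-- `M` weakly answers along `R` every `m`-step of `N`. Weak modal refinement `S ≤_m* T` asks
this of its relation for `m = must` with `(M, N) = (S, T)`, and for `m = may` with `(T, S)`. -/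
def IsWeakSim (m : Modality) (M N : MIO A) (R : M.State → N.State → Prop) : Prop :=
  ∀ x y, R x y → ∀ a ∈ N.act, ∀ y', N.step m y a y' → ∃ x', M.weakStep m x a x' ∧ R x' y'

section WeakSim

variable {m : Modality} {M N : MIO A} {R : M.State → N.State → Prop}

theorem weakRefines_iff {S T : MIO A} :
    WeakRefines S T ↔ SigEq S T ∧ ∃ R : S.State → T.State → Prop, R S.start T.start ∧
      IsWeakSim .must S T R ∧ IsWeakSim .may T S (flip R) := by
  refine ⟨fun ⟨sig, R, h₀, h⟩ => ⟨sig, R, h₀, ?_, ?_⟩, fun ⟨sig, R, h₀, hmust, hmay⟩ =>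
    ⟨sig, R, h₀, fun s t hst => ⟨?_, ?_, ?_, ?_⟩⟩⟩
  · rintro s t hst a (ha | ha) t' hstep
    · obtain ⟨s₁, s₂, s', h₁, h₂, h₃, hR⟩ := (h s t hst).1 a ha t' hstep
      exact ⟨s', Or.inr ⟨s₁, s₂, h₁, h₂, h₃⟩, hR⟩
    · obtain ⟨s', hs', hR⟩ := (h s t hst).2.1 a ha t' hstep
      exact ⟨s', Or.inl ⟨sig.2.2 ▸ ha, hs'⟩, hR⟩
  · rintro t s hst a (ha | ha) s' hstep
    · obtain ⟨t₁, t₂, t', h₁, h₂, h₃, hR⟩ := (h s t hst).2.2.1 a ha s' hstep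
      exact ⟨t', Or.inr ⟨t₁, t₂, h₁, h₂, h₃⟩, hR⟩
    · obtain ⟨t', ht', hR⟩ := (h s t hst).2.2.2 a ha s' hstep
      exact ⟨t', Or.inl ⟨sig.2.2 ▸ ha, ht'⟩, hR⟩
  · intro a ha t' hstep
    obtain ⟨s', hs', hR⟩ := hmust s t hst a (Or.inl ha) t' hstep
    obtain ⟨s₁, s₂, h₁, h₂, h₃⟩ :=
      hs'.exists_step (notMem_intl_of_mem_inp_union_out (sig.1 ▸ sig.2.1 ▸ ha))
    exact ⟨s₁, s₂, s', h₁, h₂, h₃, hR⟩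
  · intro a ha t' hstep
    obtain ⟨s', hs', hR⟩ := hmust s t hst a (Or.inr ha) t' hstep
    exact ⟨s', hs'.tauStar (sig.2.2 ▸ ha), hR⟩
  · intro a ha s' hstep
    obtain ⟨t', ht', hR⟩ := hmay t s hst a (Or.inl ha) s' hstep
    obtain ⟨t₁, t₂, h₁, h₂, h₃⟩ :=
      ht'.exists_step (notMem_intl_of_mem_inp_union_out (sig.1 ▸ sig.2.1 ▸ ha))
    exact ⟨t₁, t₂, t', h₁, h₂, h₃, hR⟩
  · intro a ha s' hstep
    obtain ⟨t', ht', hR⟩ := hmay t s hst a (Or.inr ha) s' hstep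
    exact ⟨t', ht'.tauStar (sig.2.2 ▸ ha), hR⟩

theorem isWeakSim_eq (m : Modality) (M : MIO A) : IsWeakSim m M M Eq := by
  rintro x _ rfl a - y hstep
  exact ⟨y, weakStep_of_step hstep, rfl⟩

theorem IsWeakSim.rename (f : A → B) (hf : Function.Injective f) (hR : IsWeakSim m M N R) :
    IsWeakSim m (rename f hf M) (rename f hf N) R := by
  intro x y hxy b hb y' hstep
  obtain ⟨a, rfl, hNstep⟩ := (step_rename f hf).1 hstep
  rw [act_rename, hf.mem_set_image] at hb
  obtain ⟨x', hx', hR'⟩ := hR x y hxy a hb y' hNstep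
  exact ⟨x', hx'.rename f hf, hR'⟩

theorem IsWeakSim.syncComp {M' N' : MIO A} {R' : M'.State → N'.State → Prop}
    (hR : IsWeakSim m M N R) (hR' : IsWeakSim m M' N' R') (hMN : SigEq M N) (hMN' : SigEq M' N')
    (hM : Composable M M') (hN : Composable N N') :
    IsWeakSim m (syncComp M M' hM) (syncComp N N' hN) fun p q => R p.1 q.1 ∧ R' p.2 q.2 := by
  have hsh : shared M M' = shared N N' := hMN.shared_eq hMN'
  rintro ⟨x, x'⟩ ⟨y, y'⟩ ⟨hxy, hxy'⟩ a - ⟨y₂, y₂'⟩ hstep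
  rcases (step_syncComp hN).1 hstep with ⟨ha, hy, hy'⟩ | ⟨ha, hna, hy, rfl⟩ | ⟨ha, hna, hy, rfl⟩
  · obtain ⟨x₂, hx, hR₂⟩ := hR x y hxy a ha.1 y₂ hy
    obtain ⟨x₂', hx', hR₂'⟩ := hR' x' y' hxy' a ha.2 y₂' hy'
    exact ⟨(x₂, x₂'), hx.syncComp_shared hM hx' (hsh ▸ ha), hR₂, hR₂'⟩
  · obtain ⟨x₂, hx, hR₂⟩ := hR x y hxy a ha y₂ hy
    exact ⟨(x₂, x'), hx.syncComp_left hM (hMN.act_eq ▸ ha) (hsh ▸ hna), hR₂, hxy'⟩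
  · obtain ⟨x₂', hx', hR₂'⟩ := hR' x' y' hxy' a ha y₂' hy
    exact ⟨(x, x₂'), hx'.syncComp_right hM (hMN'.act_eq ▸ ha) (hsh ▸ hna), hxy, hR₂'⟩

theorem IsWeakSim.exists_tauStar (hR : IsWeakSim m M N R) (hMN : SigEq M N) {x : M.State}
    {y y' : N.State} (hxy : R x y) (hy : N.tauStar m y y') :
    ∃ x', M.tauStar m x x' ∧ R x' y' := by
  induction hy with
  | refl => exact ⟨x, .refl, hxy⟩
  | tail _ hstep ih =>
    obtain ⟨x₁, hx₁, hR₁⟩ := ih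
    obtain ⟨a, ha, hstep⟩ := hstep
    obtain ⟨x₂, hx₂, hR₂⟩ := hR _ _ hR₁ a (Or.inr ha) _ hstep
    exact ⟨x₂, hx₁.trans (hx₂.tauStar (hMN.2.2 ▸ ha)), hR₂⟩

theorem IsWeakSim.exists_tauStar_step (hR : IsWeakSim m M N R) (hMN : SigEq M N) {x : M.State}
    {y y₁ y₂ : N.State} {a : A} (hxy : R x y) (hy : N.tauStar m y y₁)
    (ha : a ∈ N.inp ∪ N.out) (hstep : N.step m y₁ a y₂) :
    ∃ x₁ x₂, M.tauStar m x x₁ ∧ M.step m x₁ a x₂ := by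
  obtain ⟨x', hx', hR'⟩ := hR.exists_tauStar hMN hxy hy
  obtain ⟨x'', hx'', -⟩ := hR _ _ hR' a (Or.inl ha) _ hstep
  obtain ⟨x₁, x₂, h₁, h₂, -⟩ :=
    hx''.exists_step (notMem_intl_of_mem_inp_union_out (hMN.1 ▸ hMN.2.1 ▸ ha))
  exact ⟨x₁, x₂, hx'.trans h₁, h₂⟩

end WeakSim

section Reachability

theorem Reachable.tauStar {M : MIO A} {x y : M.State} (hx : M.Reachable x)
    (h : M.tauStar .may x y) : M.Reachable y :=
  hx.trans (Relation.ReflTransGen.mono (fun _ _ ⟨a, _, hstep⟩ => ⟨a, hstep⟩) _ _ h)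

theorem Reachable.weakStep {M : MIO A} {x y : M.State} {a : A} (hx : M.Reachable x)
    (h : M.weakStep .may x a y) : M.Reachable y := by
  rcases h with ⟨-, h⟩ | ⟨x₁, x₂, h₁, h₂, h₃⟩
  exacts [hx.tauStar h, Reachable.tauStar ((hx.tauStar h₁).tail ⟨a, h₂⟩) h₃]

theorem mem_act_of_may_syncComp {S T : MIO A} (h : Composable S T)
    {p p' : S.State × T.State} {a : A} (hstep : (syncComp S T h).may p a p') :
    a ∈ (syncComp S T h).act := by
  rw [act_syncComp]
  rcases hstep with ⟨ha, -⟩ | ⟨ha, -⟩ | ⟨ha, -⟩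
  exacts [Or.inl ha.1, Or.inl ha, Or.inr ha]

theorem IsWeakSim.exists_reachable {M N : MIO A} {R : N.State → M.State → Prop}
    (hR : IsWeakSim .may N M R) (h₀ : R N.start M.start)
    (hact : ∀ x a y, M.may x a y → a ∈ M.act) {p : M.State} (hp : M.Reachable p) :
    ∃ q, N.Reachable q ∧ R q p := by
  induction hp with
  | refl => exact ⟨N.start, .refl, h₀⟩
  | tail _ hstep ih =>
    obtain ⟨q, hq, hRq⟩ := ih
    obtain ⟨a, hstep⟩ := hstep
    obtain ⟨q', hq', hRq'⟩ := hR _ _ hRq a (hact _ _ _ hstep) _ hstep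
    exact ⟨q', hq.weakStep hq', hRq'⟩

end Reachability

section Refinement

variable {S S' T T' : MIO A}

theorem weakRefines_refl (S : MIO A) : WeakRefines S S :=
  weakRefines_iff.2 ⟨⟨rfl, rfl, rfl⟩, Eq, rfl, isWeakSim_eq _ S, by
    rw [Std.Symm.flip_eq]
    exact isWeakSim_eq _ S⟩

theorem WeakRefines.rename (f : A → B) (hf : Function.Injective f) (h : WeakRefines S' S) :
    WeakRefines (rename f hf S') (rename f hf S) := by
  obtain ⟨sig, R, h₀, hmust, hmay⟩ := weakRefines_iff.1 h
  refine weakRefines_iff.2 ⟨⟨?_, ?_, ?_⟩, R, h₀, hmust.rename f hf, hmay.rename f hf⟩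
  · exact congrArg (f '' ·) sig.1
  · exact congrArg (f '' ·) sig.2.1
  · exact congrArg (f '' ·) sig.2.2

theorem WeakRefines.syncComp (hS : WeakRefines S' S) (hT : WeakRefines T' T)
    (hc' : Composable S' T') (hc : Composable S T) :
    WeakRefines (syncComp S' T' hc') (syncComp S T hc) := by
  obtain ⟨sigS, RS, hRS₀, hRS, hRS'⟩ := weakRefines_iff.1 hS
  obtain ⟨sigT, RT, hRT₀, hRT, hRT'⟩ := weakRefines_iff.1 hT
  exact weakRefines_iff.2 ⟨sigS.syncComp sigT hc' hc, _, ⟨hRS₀, hRT₀⟩,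
    hRS.syncComp hRT sigS sigT hc' hc, hRS'.syncComp hRT' sigS.symm sigT.symm hc hc'⟩

theorem WeakCompat.of_weakRefines (h : WeakCompat S T) (hS : WeakRefines S' S)
    (hT : WeakRefines T' T) : WeakCompat S' T' := by
  obtain ⟨hc, hcompat⟩ := h
  obtain ⟨sigS, RS, hRS₀, hRS, hRS'⟩ := weakRefines_iff.1 hS
  obtain ⟨sigT, RT, hRT₀, hRT, hRT'⟩ := weakRefines_iff.1 hT
  have hc' : Composable S' T' := hc.of_sigEq sigS sigT
  refine ⟨hc', fun p' hp' => ?_⟩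
  obtain ⟨p, hp, hRp₁, hRp₂⟩ := (hRS'.syncComp hRT' sigS.symm sigT.symm hc hc').exists_reachable
    ⟨hRS₀, hRT₀⟩ (fun _ _ _ => mem_act_of_may_syncComp hc') hp'
  constructor
  · rintro a ⟨haS, haT⟩ s₂ hs₂
    obtain ⟨u, hu, -⟩ := hRS' _ _ hRp₁ a (Or.inl (Or.inr haS)) s₂ hs₂
    obtain ⟨u₁, u₂, hu₁, hu₂, -⟩ :=
      hu.exists_step (notMem_intl_of_mem_inp_union_out (Or.inr (sigS.2.1 ▸ haS)))
    obtain ⟨t₁, t₂, ht₁, ht₂⟩ := (hcompat (u₁, p.2) (hp.tauStar (tauStar_syncComp_left hc hu₁))).1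
      a ⟨sigS.2.1 ▸ haS, sigT.1 ▸ haT⟩ u₂ hu₂
    exact hRT.exists_tauStar_step sigT hRp₂ ht₁ (Or.inl (sigT.1 ▸ haT)) ht₂
  · rintro a ⟨haT, haS⟩ t₂ ht₂
    obtain ⟨u, hu, -⟩ := hRT' _ _ hRp₂ a (Or.inl (Or.inr haT)) t₂ ht₂
    obtain ⟨u₁, u₂, hu₁, hu₂, -⟩ :=
      hu.exists_step (notMem_intl_of_mem_inp_union_out (Or.inr (sigT.2.1 ▸ haT)))
    obtain ⟨s₁, s₂, hs₁, hs₂⟩ := (hcompat (p.1, u₁) (hp.tauStar (tauStar_syncComp_right hc hu₁))).2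
      a ⟨sigT.2.1 ▸ haT, sigS.1 ▸ haS⟩ u₂ hu₂
    exact hRS.exists_tauStar_step sigS hRp₁ hs₁ (Or.inl (sigS.1 ▸ haS)) hs₂

theorem WeakRefines.omega {o' o : Set A} (e : o' = o) (h : WeakRefines S' S)
    (ho' : o' ⊆ S'.out) (ho : o ⊆ S.out) : WeakRefines (Omega o' S' ho') (Omega o S ho) := by
  subst e
  exact (h.rename _ _).syncComp (weakRefines_refl _) _ _

theorem WeakRefines.omegaC (hS : WeakRefines S' S) (hT : WeakRefines T' T) :
    WeakRefines (OmegaC S' T') (OmegaC S T) :=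
  hS.omega (by rw [oOf, oOf, hS.1.2.1, hT.1.1]) _ _

end Refinement

section Queues

variable {o : Set A} {S T : MIO A} {a : A}

theorem tagged_of_mem (h : a ∈ o) : tagged o a = .inr a := if_pos h

theorem tagged_of_notMem (h : a ∉ o) : tagged o a = .inl a := if_neg h

theorem inl_mem_image_tagged {s : Set A} : Sum.inl a ∈ tagged o '' s ↔ a ∈ s ∧ a ∉ o := by
  refine ⟨fun ⟨x, hx, he⟩ => ?_, fun ⟨ha, hao⟩ => ⟨a, ha, tagged_of_notMem hao⟩⟩
  by_cases hxo : x ∈ o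
  · rw [tagged_of_mem hxo] at he
    exact nomatch he
  · rw [tagged_of_notMem hxo, Sum.inl_injective.eq_iff] at he
    exact he ▸ ⟨hx, hxo⟩

theorem act_queueMIO : (queueMIO o).act = Sum.inr '' o ∪ Sum.inl '' o := Set.union_empty _

theorem inl_notMem_shared_rename_queueMIO (S : MIO A) (a : A) :
    Sum.inl a ∉ shared (rename (tagged o) (tagged_injective o) S) (queueMIO o) := by
  rintro ⟨hS, hQ⟩
  rw [act_rename, inl_mem_image_tagged] at hS
  rw [act_queueMIO] at hQ
  rcases hQ with ⟨n, -, he⟩ | ⟨n, hn, he⟩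
  · exact nomatch he
  · exact hS.2 (Sum.inl_injective he ▸ hn)

theorem image_inl_inp_subset_inp_Omega (ho : o ⊆ S.out) :
    Sum.inl '' S.inp ⊆ (Omega o S ho).inp := by
  rintro _ ⟨a, ha, rfl⟩
  exact ⟨Or.inl (inl_mem_image_tagged.2 ⟨ha, fun h => S.inp_out a ha (ho h)⟩),
    inl_notMem_shared_rename_queueMIO S a⟩

theorem image_inl_out_subset_out_Omega (ho : o ⊆ S.out) :
    Sum.inl '' S.out ⊆ (Omega o S ho).out := by
  rintro _ ⟨a, ha, rfl⟩
  refine ⟨?_, inl_notMem_shared_rename_queueMIO S a⟩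
  by_cases hao : a ∈ o
  · exact Or.inr ⟨a, hao, rfl⟩
  · exact Or.inl (inl_mem_image_tagged.2 ⟨ha, hao⟩)

theorem act_Omega_subset (ho : o ⊆ S.out) :
    (Omega o S ho).act ⊆ Sum.inl '' S.act ∪ Sum.inr '' o := by
  rw [Omega, act_syncComp, act_rename, act_queueMIO]
  rintro _ (⟨a, ha, rfl⟩ | ⟨n, hn, rfl⟩ | ⟨n, hn, rfl⟩)
  · by_cases hao : a ∈ o
    · exact Or.inr ⟨a, hao, (tagged_of_mem hao).symm⟩
    · exact Or.inl ⟨a, ha, (tagged_of_notMem hao).symm⟩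
  · exact Or.inr ⟨n, hn, rfl⟩
  · exact Or.inl ⟨n, Or.inl (Or.inr (ho hn)), rfl⟩

theorem Composable.asyncComposable (h : Composable S T) : AsyncComposable S T := by
  rintro b ⟨hbS, hbT⟩
  rcases act_Omega_subset _ hbS with ⟨a, haS, rfl⟩ | ⟨n, hnS, rfl⟩ <;>
    rcases act_Omega_subset _ hbT with ⟨c, hcT, he⟩ | ⟨m, hmT, he⟩
  · obtain rfl := Sum.inl_injective he
    rcases h ⟨haS, hcT⟩ with ⟨hi, ho⟩ | ⟨hi, ho⟩
    · exact Or.inl ⟨image_inl_inp_subset_inp_Omega _ ⟨c, hi, rfl⟩,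
        image_inl_out_subset_out_Omega _ ⟨c, ho, rfl⟩⟩
    · exact Or.inr ⟨image_inl_inp_subset_inp_Omega _ ⟨c, hi, rfl⟩,
        image_inl_out_subset_out_Omega _ ⟨c, ho, rfl⟩⟩
  · exact nomatch he
  · exact nomatch he
  · obtain rfl := Sum.inr_injective he
    exact (S.inp_out m hmT.2 hnS.1).elim

end Queues

end MIO

/-- MIOs with asynchronous composition, weak modal refinement and asynchronous
modal compatibility form an interface theory. -/
theorem async_interface_theory (A : Type) :
    (∀ S T : MIO A, AsyncCompat S T → Composable S T ∧ AsyncComposable S T) ∧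
    (∀ S S' T T' : MIO A, WeakRefines S' S → WeakRefines T' T → Composable S T →
      Composable S' T' ∧
        ∃ (hA : AsyncComposable S T) (hA' : AsyncComposable S' T'),
          WeakRefines (asyncComp S' T' hA') (asyncComp S T hA)) ∧
    (∀ S S' T T' : MIO A,
      AsyncCompat S T → WeakRefines S' S → WeakRefines T' T →
      AsyncCompat S' T') := by
  refine ⟨fun S T h => ⟨h.1, h.2.1⟩, fun S S' T T' hS hT hc => ?_, fun S S' T T' h hS hT => ?_⟩
  · have hc' : Composable S' T' := hc.of_sigEq hS.1 hT.1
    exact ⟨hc', hc.asyncComposable, hc'.asyncComposable,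
      (hS.omegaC hT).syncComp (hT.omegaC hS) _ _⟩
  · exact ⟨h.1.of_sigEq hS.1 hT.1, h.2.of_weakRefines (hS.omegaC hT) (hT.omegaC hS)⟩
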